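/- The quantity χ²₊(G_μ) := ∫₀¹ (|G_μ'(x)| − 1)₊² dx equals e^{μ²}·Φ(3μ/2) + 3Φ(−μ/2) − 2 for μ ≥ 0, where (a)₊ = max{a, 0}. -/

import Mathlib

open MeasureTheory ProbabilityTheory Set

noncomputable def stdNormCDF (x : ℝ) : ℝ := cdf (gaussianReal 0 1) x

noncomputable def stdNormCDFInv (p : ℝ) : ℝ := sInf {x : ℝ | p ≤ stdNormCDF x}

noncomputable def Gmu (μ α : ℝ) : ℝ :=
  if α ≤ 0 then 1 else if 1 ≤ α then 0 else stdNormCDF (stdNormCDFInv (1 - α) - μ)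

noncomputable def nphi (t : ℝ) : ℝ := (Real.sqrt (2 * Real.pi))⁻¹ * Real.exp (-t ^ 2 / 2)

lemma nphi_eq : gaussianPDFReal 0 1 = nphi := by
  ext x
  simp [gaussianPDFReal, nphi, sub_zero]

lemma nphi_pos (t : ℝ) : 0 < nphi t := by
  have : (0:ℝ) < Real.sqrt (2 * Real.pi) := Real.sqrt_pos.2 (by positivity)
  exact mul_pos (inv_pos.2 this) (Real.exp_pos _)

lemma continuous_nphi : Continuous nphi := by
  unfold nphi; fun_prop

lemma integrable_nphi : Integrable nphi := nphi_eq ▸ integrable_gaussianPDFReal 0 1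

lemma integral_nphi : ∫ t, nphi t = 1 := nphi_eq ▸ integral_gaussianPDFReal_eq_one 0 one_ne_zero

lemma stdNormCDF_eq (x : ℝ) : stdNormCDF x = ∫ t in Iic x, nphi t := by
  rw [stdNormCDF, cdf_eq_real, measureReal_def, gaussianReal_apply_eq_integral 0 one_ne_zero, nphi_eq,
    ENNReal.toReal_ofReal (integral_nonneg fun t => (nphi_pos t).le)]

lemma hasDerivAt_stdNormCDF (x : ℝ) : HasDerivAt stdNormCDF (nphi x) x := by
  have key : ∀ z, stdNormCDF z = stdNormCDF 0 + ∫ t in (0:ℝ)..z, nphi t := by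
    intro z
    rw [stdNormCDF_eq, stdNormCDF_eq, ← intervalIntegral.integral_Iic_sub_Iic
      integrable_nphi.integrableOn integrable_nphi.integrableOn]
    ring
  have h : HasDerivAt (fun z => stdNormCDF 0 + ∫ t in (0:ℝ)..z, nphi t) (nphi x) x := by
    refine HasDerivAt.const_add _ (intervalIntegral.integral_hasDerivAt_right
      integrable_nphi.intervalIntegrable ?_ continuous_nphi.continuousAt)
    exact continuous_nphi.stronglyMeasurable.stronglyMeasurableAtFilter
  exact h.congr_of_eventuallyEq (Filter.Eventually.of_forall key)

lemma continuous_stdNormCDF : Continuous stdNormCDF :=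
  continuous_iff_continuousAt.2 fun x => (hasDerivAt_stdNormCDF x).continuousAt

lemma strictMono_stdNormCDF : StrictMono stdNormCDF := by
  refine strictMono_of_deriv_pos fun x => ?_
  rw [(hasDerivAt_stdNormCDF x).deriv]; exact nphi_pos x

lemma nphi_shift (c y : ℝ) : nphi (y - c) = Real.exp (c * y - c ^ 2 / 2) * nphi y := by
  unfold nphi
  rw [mul_comm (Real.exp _), mul_assoc, ← Real.exp_add]
  ring_nf

lemma nphi_neg (t : ℝ) : nphi (-t) = nphi t := by
  simp [nphi, neg_pow]

lemma integral_Ici_nphi (t : ℝ) : ∫ y in Ici t, nphi y = 1 - stdNormCDF t := by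
  have h := intervalIntegral.integral_Iic_add_Ioi (b := t) (f := nphi) (μ := volume)
    integrable_nphi.integrableOn integrable_nphi.integrableOn
  rw [integral_Ici_eq_integral_Ioi, ← stdNormCDF_eq] at *
  rw [integral_nphi] at h
  linarith

lemma stdNormCDF_neg (t : ℝ) : stdNormCDF (-t) = 1 - stdNormCDF t := by
  rw [stdNormCDF_eq, ← integral_Ici_nphi]
  calc ∫ x in Iic (-t), nphi x
      = ∫ x, (Iic (-t)).indicator nphi x := (integral_indicator measurableSet_Iic).symm
    _ = ∫ x, (Ici t).indicator nphi (-x) := by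
        congr 1; ext x
        by_cases h : x ≤ -t
        · rw [indicator_of_mem (mem_Iic.2 h), indicator_of_mem (mem_Ici.2 (by linarith)), nphi_neg]
        · rw [indicator_of_notMem (by simpa using h),
            indicator_of_notMem (by simp [mem_Ici]; linarith [not_le.1 h])]
    _ = ∫ x, (Ici t).indicator nphi x := integral_neg_eq_self _ _
    _ = ∫ x in Ici t, nphi x := integral_indicator measurableSet_Ici

lemma stdNormCDF_mem_Ioo (t : ℝ) : stdNormCDF t ∈ Ioo (0:ℝ) 1 := by
  constructor
  · have h0 : (0:ℝ) ≤ stdNormCDF (t - 1) := by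
      rw [stdNormCDF_eq]
      exact setIntegral_nonneg measurableSet_Iic fun y _ => (nphi_pos y).le
    exact lt_of_le_of_lt h0 (strictMono_stdNormCDF (by linarith))
  · have h1 : stdNormCDF (t + 1) ≤ 1 := by
      have h2 := integral_Ici_nphi (t + 1)
      have h3 : (0:ℝ) ≤ ∫ y in Ici (t + 1), nphi y :=
        setIntegral_nonneg measurableSet_Ici fun y _ => (nphi_pos y).le
      linarith
    exact lt_of_lt_of_le (strictMono_stdNormCDF (by linarith)) h1

lemma exists_stdNormCDF_eq {p : ℝ} (hp : p ∈ Ioo (0:ℝ) 1) : ∃ x, stdNormCDF x = p := by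
  have hbot : Filter.Tendsto stdNormCDF Filter.atBot (nhds 0) := tendsto_cdf_atBot _
  have htop : Filter.Tendsto stdNormCDF Filter.atTop (nhds 1) := tendsto_cdf_atTop _
  obtain ⟨a, ha⟩ := (hbot.eventually_lt_const hp.1).exists
  obtain ⟨b, hb⟩ := (htop.eventually_const_lt hp.2).exists
  have hab : a ≤ b := (strictMono_stdNormCDF.lt_iff_lt.mp (ha.trans hb)).le
  obtain ⟨x, -, hx⟩ := intermediate_value_Icc hab continuous_stdNormCDF.continuousOn
    ⟨ha.le, hb.le⟩
  exact ⟨x, hx⟩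

lemma stdNormCDFInv_cdf (x : ℝ) : stdNormCDFInv (stdNormCDF x) = x := by
  have h : {y : ℝ | stdNormCDF x ≤ stdNormCDF y} = Ici x := by
    ext y; simp [strictMono_stdNormCDF.le_iff_le]
  rw [stdNormCDFInv, h, csInf_Ici]

lemma cdf_stdNormCDFInv {p : ℝ} (hp : p ∈ Ioo (0:ℝ) 1) : stdNormCDF (stdNormCDFInv p) = p := by
  obtain ⟨x, hx⟩ := exists_stdNormCDF_eq hp
  rw [← hx, stdNormCDFInv_cdf]

lemma continuousAt_stdNormCDFInv {p : ℝ} (hp : p ∈ Ioo (0:ℝ) 1) :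
    ContinuousAt stdNormCDFInv p := by
  obtain ⟨x, hx⟩ := exists_stdNormCDF_eq hp
  rw [Metric.continuousAt_iff]
  intro ε hε
  have h1 : stdNormCDF (x - ε/2) < p := hx ▸ strictMono_stdNormCDF (by linarith)
  have h2 : p < stdNormCDF (x + ε/2) := hx ▸ strictMono_stdNormCDF (by linarith)
  refine ⟨min (p - stdNormCDF (x - ε/2)) (stdNormCDF (x + ε/2) - p),
    lt_min (by linarith) (by linarith), fun {q} hq => ?_⟩
  rw [Real.dist_eq] at hq ⊢
  have hql := abs_lt.1 hq
  have hmin1 := min_le_left (p - stdNormCDF (x - ε/2)) (stdNormCDF (x + ε/2) - p)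
  have hmin2 := min_le_right (p - stdNormCDF (x - ε/2)) (stdNormCDF (x + ε/2) - p)
  have hq1 : stdNormCDF (x - ε/2) < q := by linarith
  have hq2 : q < stdNormCDF (x + ε/2) := by linarith
  have hqIoo : q ∈ Ioo (0:ℝ) 1 :=
    ⟨lt_trans (stdNormCDF_mem_Ioo (x - ε/2)).1 hq1, lt_trans hq2 (stdNormCDF_mem_Ioo (x + ε/2)).2⟩
  have hz : stdNormCDF (stdNormCDFInv q) = q := cdf_stdNormCDFInv hqIoo
  have hz1 : x - ε/2 < stdNormCDFInv q :=
    strictMono_stdNormCDF.lt_iff_lt.mp (by rw [hz]; exact hq1)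
  have hz2 : stdNormCDFInv q < x + ε/2 :=
    strictMono_stdNormCDF.lt_iff_lt.mp (by rw [hz]; exact hq2)
  have hxp : stdNormCDFInv p = x := by rw [← hx, stdNormCDFInv_cdf]
  rw [hxp, abs_lt]
  constructor <;> linarith

lemma hasDerivAt_stdNormCDFInv {p : ℝ} (hp : p ∈ Ioo (0:ℝ) 1) :
    HasDerivAt stdNormCDFInv (nphi (stdNormCDFInv p))⁻¹ p := by
  refine HasDerivAt.of_local_left_inverse (continuousAt_stdNormCDFInv hp)
    (hasDerivAt_stdNormCDF _) (nphi_pos _).ne' ?_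
  filter_upwards [isOpen_Ioo.mem_nhds hp] with q hq
  exact cdf_stdNormCDFInv hq

lemma deriv_Gmu {μ x : ℝ} (hx : x ∈ Ioo (0:ℝ) 1) :
    deriv (Gmu μ) x = -Real.exp (μ * stdNormCDFInv (1 - x) - μ ^ 2 / 2) := by
  obtain ⟨hx0, hx1⟩ := hx
  have h1x : (1 - x) ∈ Ioo (0:ℝ) 1 := ⟨by linarith, by linarith⟩
  have hone : HasDerivAt (fun t : ℝ => 1 - t) (-1 : ℝ) x := by
    simpa using (hasDerivAt_id x).const_sub 1
  have hinner : HasDerivAt (fun t : ℝ => stdNormCDFInv (1 - t) - μ)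
      ((nphi (stdNormCDFInv (1 - x)))⁻¹ * (-1)) x :=
    (((hasDerivAt_stdNormCDFInv h1x).comp x hone)).sub_const μ
  have houter : HasDerivAt (fun t : ℝ => stdNormCDF (stdNormCDFInv (1 - t) - μ))
      (nphi (stdNormCDFInv (1 - x) - μ) * ((nphi (stdNormCDFInv (1 - x)))⁻¹ * (-1))) x :=
    (hasDerivAt_stdNormCDF _).comp x hinner
  have heq : Gmu μ =ᶠ[nhds x] fun t => stdNormCDF (stdNormCDFInv (1 - t) - μ) := by
    filter_upwards [isOpen_Ioo.mem_nhds (⟨hx0, hx1⟩ : x ∈ Ioo (0:ℝ) 1)] with t ht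
    simp [Gmu, not_le.2 ht.1, not_le.2 ht.2]
  rw [heq.deriv_eq, houter.deriv, nphi_shift]
  field_simp [(nphi_pos (stdNormCDFInv (1 - x))).ne']

lemma nphi_mul_exp (c y : ℝ) :
    nphi y * Real.exp (c * y) = Real.exp (c ^ 2 / 2) * nphi (y - c) := by
  rw [nphi_shift, ← mul_assoc, ← Real.exp_add,
    show c ^ 2 / 2 + (c * y - c ^ 2 / 2) = c * y from by ring, mul_comm]

lemma gauss_exp_integral (c a : ℝ) :
    ∫ y in Ici a, nphi y * Real.exp (c * y) = Real.exp (c ^ 2 / 2) * (1 - stdNormCDF (a - c)) := by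
  simp_rw [nphi_mul_exp]
  rw [integral_const_mul]
  congr 1
  calc ∫ y in Ici a, nphi (y - c)
      = ∫ y, (Ici a).indicator (fun y => nphi (y - c)) y :=
        (integral_indicator measurableSet_Ici).symm
    _ = ∫ y, (Ici (a - c)).indicator nphi (y - c) := by
        congr 1; ext y
        by_cases h : a ≤ y
        · rw [indicator_of_mem (mem_Ici.2 h), indicator_of_mem (mem_Ici.2 (by linarith))]
        · rw [indicator_of_notMem (by simpa using h),
            indicator_of_notMem (by simp [mem_Ici]; linarith [not_le.1 h])]
    _ = ∫ y, (Ici (a - c)).indicator nphi y :=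
        integral_sub_right_eq_self ((Ici (a - c)).indicator nphi) c
    _ = 1 - stdNormCDF (a - c) := by
        rw [integral_indicator measurableSet_Ici, integral_Ici_nphi]

lemma integrable_nphi_exp (c : ℝ) : Integrable (fun y => nphi y * Real.exp (c * y)) := by
  simp_rw [nphi_mul_exp]
  exact (integrable_nphi.comp_sub_right c).const_mul _

/-- `χ²₊(G_μ) = ∫₀¹ (|G_μ'(x)| - 1)₊² dx = e^{μ²}·Φ(3μ/2) + 3Φ(-μ/2) - 2` for `μ ≥ 0`. -/
theorem statement19 (μ : ℝ) (hμ : 0 ≤ μ) :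
    ∫ x in (0:ℝ)..1, (max (|deriv (Gmu μ) x| - 1) 0) ^ 2 =
      Real.exp (μ ^ 2) * stdNormCDF (3 * μ / 2) + 3 * stdNormCDF (-μ / 2) - 2 := by
  rw [intervalIntegral.integral_of_le zero_le_one, integral_Ioc_eq_integral_Ioo]
  have step1 : ∫ x in Ioo (0:ℝ) 1, (max (|deriv (Gmu μ) x| - 1) 0) ^ 2
      = ∫ x in Ioo (0:ℝ) 1,
          (max (Real.exp (μ * stdNormCDFInv (1 - x) - μ ^ 2 / 2) - 1) 0) ^ 2 := by
    refine setIntegral_congr_fun measurableSet_Ioo fun x hx => ?_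
    rw [deriv_Gmu hx, abs_neg, Real.abs_exp]
  rw [step1]
  have himg : (fun y => 1 - stdNormCDF y) '' univ = Ioo 0 1 := by
    apply Subset.antisymm
    · rintro _ ⟨y, -, rfl⟩
      have h := stdNormCDF_mem_Ioo y
      simp only [mem_Ioo]
      constructor <;> [linarith [h.2]; linarith [h.1]]
    · rintro p hp
      obtain ⟨y, hy⟩ := exists_stdNormCDF_eq
        (⟨by linarith [hp.2], by linarith [hp.1]⟩ : (1:ℝ) - p ∈ Ioo 0 1)
      exact ⟨y, mem_univ _, by simp only; rw [hy]; ring⟩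
  have hder : ∀ y ∈ (univ : Set ℝ),
      HasDerivWithinAt (fun y => 1 - stdNormCDF y) (-(nphi y)) univ y :=
    fun y _ => ((hasDerivAt_stdNormCDF y).const_sub 1).hasDerivWithinAt
  have hinj : InjOn (fun y => 1 - stdNormCDF y) univ := by
    intro a _ b _ h
    simp only at h
    exact strictMono_stdNormCDF.injective (by linarith)
  have step2 := integral_image_eq_integral_abs_deriv_smul MeasurableSet.univ hder hinj
    (fun x => (max (Real.exp (μ * stdNormCDFInv (1 - x) - μ ^ 2 / 2) - 1) 0) ^ 2)
  rw [himg] at step2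
  rw [step2, Measure.restrict_univ]
  have key : (fun y : ℝ => |(-(nphi y))| •
        (max (Real.exp (μ * stdNormCDFInv (1 - (1 - stdNormCDF y)) - μ ^ 2 / 2) - 1) 0) ^ 2)
      = (Ici (μ/2)).indicator (fun y => nphi y * (Real.exp (μ * y - μ ^ 2 / 2) - 1) ^ 2) := by
    ext y
    rw [show (1 : ℝ) - (1 - stdNormCDF y) = stdNormCDF y from by ring, stdNormCDFInv_cdf,
      abs_neg, abs_of_pos (nphi_pos y), smul_eq_mul]
    by_cases h : μ/2 ≤ y
    · rw [indicator_of_mem (mem_Ici.2 h)]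
      have h0 : 0 ≤ μ * y - μ ^ 2 / 2 := by nlinarith
      rw [max_eq_left (by linarith [Real.add_one_le_exp (μ * y - μ ^ 2 / 2)])]
    · rw [indicator_of_notMem (by simpa using h)]
      have h0 : μ * y - μ ^ 2 / 2 ≤ 0 := by
        nlinarith [mul_nonneg hμ (le_of_lt (sub_pos.2 (not_le.1 h)))]
      have h1 : Real.exp (μ * y - μ ^ 2 / 2) ≤ 1 := Real.exp_le_one_iff.2 h0
      rw [max_eq_right (by linarith)]
      simp
  rw [key, integral_indicator measurableSet_Ici]
  have expand : ∀ y : ℝ, nphi y * (Real.exp (μ * y - μ ^ 2 / 2) - 1) ^ 2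
      = Real.exp (-μ ^ 2) * (nphi y * Real.exp (2 * μ * y))
        - (2 * Real.exp (-μ ^ 2 / 2)) * (nphi y * Real.exp (μ * y)) + nphi y := by
    intro y
    have h2 : Real.exp (-μ ^ 2) = Real.exp (-μ ^ 2 / 2) * Real.exp (-μ ^ 2 / 2) := by
      rw [← Real.exp_add]; ring_nf
    have h3 : Real.exp (2 * μ * y) = Real.exp (μ * y) * Real.exp (μ * y) := by
      rw [← Real.exp_add]; ring_nf
    rw [show μ * y - μ ^ 2 / 2 = -μ ^ 2 / 2 + μ * y from by ring, Real.exp_add, h2, h3]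
    ring
  simp_rw [expand]
  have i1 : Integrable (fun y => Real.exp (-μ ^ 2) * (nphi y * Real.exp (2 * μ * y))) :=
    (integrable_nphi_exp (2 * μ)).const_mul _
  have i2 : Integrable (fun y =>
      2 * Real.exp (-μ ^ 2 / 2) * (nphi y * Real.exp (μ * y))) :=
    (integrable_nphi_exp μ).const_mul _
  have i12 : Integrable (fun y => Real.exp (-μ ^ 2) * (nphi y * Real.exp (2 * μ * y))
      - 2 * Real.exp (-μ ^ 2 / 2) * (nphi y * Real.exp (μ * y))) := i1.sub i2
  rw [integral_add i12.integrableOn integrable_nphi.integrableOn,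
    integral_sub i1.integrableOn i2.integrableOn, integral_const_mul, integral_const_mul,
    gauss_exp_integral, gauss_exp_integral, integral_Ici_nphi]
  rw [show μ / 2 - 2 * μ = -(3 * μ / 2) from by ring,
    show μ / 2 - μ = -(μ / 2) from by ring,
    show -μ / 2 = -(μ / 2) from by ring,
    stdNormCDF_neg (3 * μ / 2), stdNormCDF_neg (μ / 2)]
  have hA : Real.exp (-μ ^ 2) * Real.exp ((2 * μ) ^ 2 / 2) = Real.exp (μ ^ 2) := by
    rw [← Real.exp_add]; ring_nf
  have hB : Real.exp (-μ ^ 2 / 2) * Real.exp (μ ^ 2 / 2) = 1 := by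
    rw [← Real.exp_add, show -μ ^ 2 / 2 + μ ^ 2 / 2 = 0 from by ring, Real.exp_zero]
  linear_combination stdNormCDF (3 * μ / 2) * hA - 2 * stdNormCDF (μ / 2) * hB
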